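/- Let Z and W be independent real random variables on a probability space (Ω, 𝓕, ℙ), each distributed as the Gaussian with mean 0 and variance 2, and let a ∈ ℝ. Then ℙ( |a + Z| ≥ |W| ) = (1/2)·(1 + erf(a/(2√2))²). -/

import Mathlib

/-!
Put `S = Z + W` and `D = Z - W`. Since `(a + Z)² - W² = (a + S) (a + D)`, the event is
`0 ≤ (a + S) (a + D)`. The pair `(S, D)` is Gaussian with `Cov(S, D) = Var Z - Var W = 0`,
so `S` and `D` are independent `N(0, 4)` variables and the probability is `p² + (1 - p)²`
with `p = ℙ(a + S ≥ 0) = (1 + erf (a / (2√2))) / 2`. The Gaussian distribution function is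
expressed through `erf` by standardising to `N(0, 1/2)`, whose density is `e^{-t²} / √π`.
-/

open Real MeasureTheory ProbabilityTheory intervalIntegral

noncomputable def erf (x : ℝ) : ℝ :=
  (2 / Real.sqrt Real.pi) * ∫ t in (0 : ℝ)..x, Real.exp (-t ^ 2)

open Set
open scoped NNReal

lemma erf_neg (x : ℝ) : erf (-x) = -erf x := by
  have h := integral_comp_neg (a := x) (b := 0) (fun t ↦ exp (-t ^ 2))
  simp only [neg_sq, neg_zero] at h
  rw [erf, erf, ← h, integral_symm]
  ring

lemma integral_Iic_exp_neg_sq (c : ℝ) :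
    ∫ t in Iic c, exp (-t ^ 2) = √π / 2 * (1 + erf c) := by
  have hint : Integrable (fun t : ℝ ↦ exp (-t ^ 2)) := by
    simpa using integrable_exp_neg_mul_sq one_pos
  have hhalf : ∫ t in Iic 0, exp (-t ^ 2) = √π / 2 := by
    have h := integral_comp_neg_Iic 0 (fun t ↦ exp (-t ^ 2))
    simp only [neg_sq, neg_zero] at h
    simpa [h] using integral_gaussian_Ioi 1
  have hsplit := integral_Iic_sub_Iic (a := 0) (b := c) hint.integrableOn hint.integrableOn
  rw [hhalf] at hsplit
  rw [erf]
  field_simp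
  linarith

namespace ProbabilityTheory

lemma gaussianPDFReal_zero_half (t : ℝ) :
    gaussianPDFReal 0 2⁻¹ t = (√π)⁻¹ * exp (-t ^ 2) := by
  rw [gaussianPDFReal, NNReal.coe_inv, NNReal.coe_ofNat, mul_comm 2 π,
    mul_inv_cancel_right₀ two_ne_zero, mul_inv_cancel₀ two_ne_zero, sub_zero, div_one]

lemma gaussianReal_zero_half_real_Iic (c : ℝ) :
    (gaussianReal 0 2⁻¹).real (Iic c) = (1 + erf c) / 2 := by
  rw [measureReal_def, gaussianReal_apply_eq_integral _ (by norm_num), ENNReal.toReal_ofReal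
    (setIntegral_nonneg measurableSet_Iic fun _ _ ↦ gaussianPDFReal_nonneg _ _ _)]
  simp_rw [gaussianPDFReal_zero_half, MeasureTheory.integral_const_mul, integral_Iic_exp_neg_sq]
  field_simp

lemma gaussianReal_real_Iic (μ : ℝ) {v : ℝ≥0} (hv : v ≠ 0) (x : ℝ) :
    (gaussianReal μ v).real (Iic x) = (1 + erf ((x - μ) / √(2 * v))) / 2 := by
  set s := √(2 * v)
  have hs : 0 < s := by positivity
  have hvar : v / .mk (s ^ 2) (sq_nonneg s) = 2⁻¹ := by
    have hs2 : s ^ 2 = 2 * v := Real.sq_sqrt (by positivity)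
    rw [← NNReal.coe_inj, NNReal.coe_div, NNReal.coe_mk, hs2]
    field_simp
    simp
  have hstd : HasLaw (fun y ↦ (y - μ) / s) (gaussianReal 0 2⁻¹) (gaussianReal μ v) := by
    simpa [hvar] using
      gaussianReal_div_const (gaussianReal_sub_const (HasLaw.id (μ := gaussianReal μ v)) μ) s
  have h := hstd.measureReal_eq (p := fun z ↦ z ≤ (x - μ) / s) measurableSet_Iic
  simp only [div_le_div_iff_of_pos_right hs, sub_le_sub_iff_right] at h
  rw [← gaussianReal_zero_half_real_Iic]
  exact h

lemma gaussianReal_real_Ici (μ : ℝ) {v : ℝ≥0} (hv : v ≠ 0) (x : ℝ) :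
    (gaussianReal μ v).real (Ici x) = (1 + erf ((μ - x) / √(2 * v))) / 2 := by
  have h := (gaussianReal_neg (HasLaw.id (μ := gaussianReal μ v))).measureReal_eq
    (p := fun z ↦ z ≤ -x) measurableSet_Iic
  simp only [Pi.neg_apply, id, neg_le_neg_iff] at h
  change (gaussianReal μ v).real (Ici x) = (gaussianReal (-μ) v).real (Iic (-x)) at h
  rw [h, gaussianReal_real_Iic _ hv, neg_sub_neg]

variable {Ω : Type*} {mΩ : MeasurableSpace Ω} {P : Measure Ω} {X Y : Ω → ℝ}

lemma covariance_add_sub [IsFiniteMeasure P] (hX : MemLp X 2 P) (hY : MemLp Y 2 P) :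
    cov[X + Y, X - Y; P] = Var[X; P] - Var[Y; P] := by
  rw [covariance_add_left hX hY (hX.sub hY), covariance_sub_right hX hX hY,
    covariance_sub_right hY hX hY, covariance_self hX.aemeasurable,
    covariance_self hY.aemeasurable, covariance_comm Y X]
  ring

lemma HasGaussianLaw.indepFun_add_sub (hX : HasGaussianLaw X P) (hY : HasGaussianLaw Y P)
    (hXY : IndepFun X Y P) (hvar : Var[X; P] = Var[Y; P]) : IndepFun (X + Y) (X - Y) P := by
  have := hX.isProbabilityMeasure
  have hsum_diff : HasGaussianLaw (fun ω ↦ ((X + Y) ω, (X - Y) ω)) P :=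
    (hXY.hasGaussianLaw hX hY).map_fun
      ((ContinuousLinearMap.fst ℝ ℝ ℝ + ContinuousLinearMap.snd ℝ ℝ ℝ).prod
        (ContinuousLinearMap.fst ℝ ℝ ℝ - ContinuousLinearMap.snd ℝ ℝ ℝ))
  refine hsum_diff.indepFun_of_covariance_eq_zero ?_
  rw [covariance_add_sub hX.memLp_two hY.memLp_two, hvar, sub_self]

lemma gaussianReal_add_of_indepFun {m₁ m₂ : ℝ} {v₁ v₂ : ℝ≥0}
    (hX : HasLaw X (gaussianReal m₁ v₁) P) (hY : HasLaw Y (gaussianReal m₂ v₂) P)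
    (hXY : IndepFun X Y P) : HasLaw (X + Y) (gaussianReal (m₁ + m₂) (v₁ + v₂)) P :=
  ⟨hX.aemeasurable.add hY.aemeasurable,
    gaussianReal_add_gaussianReal_of_indepFun hXY hX.map_eq hY.map_eq⟩

lemma gaussianReal_sub_of_indepFun {m₁ m₂ : ℝ} {v₁ v₂ : ℝ≥0}
    (hX : HasLaw X (gaussianReal m₁ v₁) P) (hY : HasLaw Y (gaussianReal m₂ v₂) P)
    (hXY : IndepFun X Y P) : HasLaw (X - Y) (gaussianReal (m₁ - m₂) (v₁ + v₂)) P := by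
  rw [sub_eq_add_neg, sub_eq_add_neg]
  exact gaussianReal_add_of_indepFun hX (gaussianReal_neg hY)
    (hXY.comp measurable_id measurable_neg)

lemma IndepFun.measureReal_mul_nonneg [IsFiniteMeasure P] (hX : AEMeasurable X P)
    (hY : AEMeasurable Y P) (hXY : IndepFun X Y P) (hX0 : P {ω | X ω = 0} = 0) :
    P.real {ω | 0 ≤ X ω * Y ω} = P.real {ω | 0 ≤ X ω} * P.real {ω | 0 ≤ Y ω} +
      P.real {ω | X ω ≤ 0} * P.real {ω | Y ω ≤ 0} := by
  have hsplit : {ω | 0 ≤ X ω * Y ω} =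
      (X ⁻¹' Ici 0 ∩ Y ⁻¹' Ici 0) ∪ (X ⁻¹' Iic 0 ∩ Y ⁻¹' Iic 0) := by
    ext ω
    simp [mul_nonneg_iff]
  have hdisj : AEDisjoint P (X ⁻¹' Ici 0 ∩ Y ⁻¹' Ici 0) (X ⁻¹' Iic 0 ∩ Y ⁻¹' Iic 0) :=
    measure_mono_null (fun ω ⟨⟨h₁, _⟩, h₂, _⟩ ↦ le_antisymm h₂ h₁) hX0
  rw [hsplit, measureReal_union₀ ((hX.nullMeasurableSet_preimage measurableSet_Iic).inter
      (hY.nullMeasurableSet_preimage measurableSet_Iic)) hdisj]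
  simp only [measureReal_def, ENNReal.toReal_mul,
    hXY.measure_inter_preimage_eq_mul _ _ measurableSet_Ici measurableSet_Ici,
    hXY.measure_inter_preimage_eq_mul _ _ measurableSet_Iic measurableSet_Iic]
  rfl

end ProbabilityTheory

lemma abs_le_abs_iff_mul_nonneg (u w : ℝ) : |w| ≤ |u| ↔ 0 ≤ (u + w) * (u - w) := by
  rw [← sq_le_sq, ← sub_nonneg]
  ring_nf

/-- for `Z, W` independent centered Gaussians with variance `2` and `a ∈ ℝ`,
`ℙ(|a + Z| ≥ |W|) = (1/2)(1 + erf(a/(2√2))²)`. -/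
theorem statement18 {Ω : Type*} [MeasurableSpace Ω] (P : Measure Ω) [IsProbabilityMeasure P]
    (Z W : Ω → ℝ) (hZ : Measurable Z) (hW : Measurable W)
    (hIndep : IndepFun Z W P)
    (hZdist : Measure.map Z P = gaussianReal 0 2)
    (hWdist : Measure.map W P = gaussianReal 0 2) (a : ℝ) :
    P {ω | |W ω| ≤ |a + Z ω|} =
      ENNReal.ofReal ((1 / 2) * (1 + erf (a / (2 * Real.sqrt 2)) ^ 2)) := by
  have hZlaw : HasLaw Z (gaussianReal 0 2) P := ⟨hZ.aemeasurable, hZdist⟩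
  have hWlaw : HasLaw W (gaussianReal 0 2) P := ⟨hW.aemeasurable, hWdist⟩
  have h4 : (2 + 2 : ℝ≥0) = 4 := by norm_num
  have hS : HasLaw (fun ω ↦ a + (Z + W) ω) (gaussianReal a 4) P := by
    simpa [h4] using gaussianReal_const_add (gaussianReal_add_of_indepFun hZlaw hWlaw hIndep) a
  have hD : HasLaw (fun ω ↦ a + (Z - W) ω) (gaussianReal a 4) P := by
    simpa [h4] using gaussianReal_const_add (gaussianReal_sub_of_indepFun hZlaw hWlaw hIndep) a
  have hSD : IndepFun (fun ω ↦ a + (Z + W) ω) (fun ω ↦ a + (Z - W) ω) P :=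
    (hZlaw.hasGaussianLaw.indepFun_add_sub hWlaw.hasGaussianLaw hIndep
      (by rw [hZlaw.variance_eq, hWlaw.variance_eq])).comp
      (measurable_const_add a) (measurable_const_add a)
  have hS0 : P {ω | a + (Z + W) ω = 0} = 0 := by
    rw [hS.measure_eq (p := (· = 0)) (measurableSet_singleton 0)]
    exact gaussianReal_absolutelyContinuous a (by norm_num) (measure_singleton 0)
  have hevent : {ω | |W ω| ≤ |a + Z ω|} = {ω | 0 ≤ (a + (Z + W) ω) * (a + (Z - W) ω)} := by
    ext ω
    simp [abs_le_abs_iff_mul_nonneg, add_assoc, add_sub_assoc]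
  have hsqrt : √(2 * ((4 : ℝ≥0) : ℝ)) = 2 * √2 := by
    rw [show 2 * ((4 : ℝ≥0) : ℝ) = 2 ^ 2 * 2 by norm_num, sqrt_mul (by norm_num),
      sqrt_sq two_pos.le]
  rw [← ofReal_measureReal, hevent,
    hSD.measureReal_mul_nonneg hS.aemeasurable hD.aemeasurable hS0,
    hS.measureReal_eq (p := (0 ≤ ·)) measurableSet_Ici,
    hD.measureReal_eq (p := (0 ≤ ·)) measurableSet_Ici,
    hS.measureReal_eq (p := (· ≤ 0)) measurableSet_Iic,
    hD.measureReal_eq (p := (· ≤ 0)) measurableSet_Iic, Ici_def, Iic_def,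
    gaussianReal_real_Ici _ (by norm_num), gaussianReal_real_Iic _ (by norm_num), hsqrt,
    zero_sub, neg_div, erf_neg, sub_zero]
  congr 1
  ring
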